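/- arXiv:1403.2022 — 3 statements merged into one kernel-verified Lean document; each statement's English description precedes it below -/
import Mathlib

section
/- If g : ℝ^d → ℝ is translation equivariant and directionally differentiable, then the directional derivative is translation equivariant in the direction argument: g̃(x; z + c·1_d) = g̃(x; z) + c for every x, z ∈ ℝ^d and c ∈ ℝ. -/
open Filter Topology

section DirectionalDerivative

variable {E : Type*} [AddCommGroup E] [Module ℝ E] {g : E → ℝ} {v : E}

lemma diffQuot_add_smul_eq (hg : ∀ (x : E) (c : ℝ), g (x + c • v) = g x + c)
    (x z : E) (c : ℝ) {t : ℝ} (ht : t ≠ 0) :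
    (g (x + t • (z + c • v)) - g x) / t = (g (x + t • z) - g x) / t + c := by
  have hshift : x + t • (z + c • v) = (x + t • z) + (t * c) • v := by
    rw [smul_add, smul_smul, add_assoc]
  rw [hshift, hg]
  field_simp
  ring

lemma Filter.Tendsto.diffQuot_add_smul (hg : ∀ (x : E) (c : ℝ), g (x + c • v) = g x + c)
    {x z : E} {L : ℝ} (h : Tendsto (fun t : ℝ => (g (x + t • z) - g x) / t) (𝓝[>] 0) (𝓝 L))
    (c : ℝ) :
    Tendsto (fun t : ℝ => (g (x + t • (z + c • v)) - g x) / t) (𝓝[>] 0) (𝓝 (L + c)) := by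
  refine (h.add_const c).congr' ?_
  filter_upwards [self_mem_nhdsWithin] with t (ht : 0 < t)
  exact (diffQuot_add_smul_eq hg x z c ht.ne').symm

end DirectionalDerivative

/-- For a translation equivariant, directionally differentiable `g`,
`g̃(x; z + c·1_d) = g̃(x; z) + c`. -/
theorem stmt3 (d : ℕ) (g : (Fin d → ℝ) → ℝ)
    (gd : (Fin d → ℝ) → (Fin d → ℝ) → ℝ)
    (htrans : ∀ (x : Fin d → ℝ) (c : ℝ), g (x + fun _ => c) = g x + c)
    (hdir : ∀ x z : Fin d → ℝ,
      Tendsto (fun t : ℝ => (g (x + t • z) - g x) / t) (nhdsWithin 0 (Set.Ioi 0))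
        (nhds (gd x z))) :
    ∀ (x z : Fin d → ℝ) (c : ℝ), gd x (z + fun _ => c) = gd x z + c := by
  intro x z c
  have hconst : ∀ c : ℝ, (fun _ : Fin d => c) = c • fun _ => (1 : ℝ) := fun c => by
    funext; simp
  have hg : ∀ (x : Fin d → ℝ) (c : ℝ), g (x + c • fun _ => (1 : ℝ)) = g x + c :=
    fun x c => by rw [← hconst]; exact htrans x c
  rw [hconst c]
  exact tendsto_nhds_unique (hdir x _) ((hdir x z).diffQuot_add_smul hg c)
end

section
/- Suppose f₁, f₂ : ℝ → ℝ are non-constant functions and g₁, g₂ : ℝ^d → ℝ are both translation-scale equivariant. If f₁ ∘ g₁ = f₂ ∘ g₂ as functions on ℝ^d, then f₁ = f₂ and g₁ = g₂. -/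
/-!
Evaluating on the diagonal, where an equivariant map is the identity, gives `f₁ = f₂ =: f`.
If `g₁ x = a ≠ b = g₂ x` at some `x`, then evaluating on `u • x + c • 1` gives
`f (u a + c) = f (u b + c)` for all `u ≥ 0` and `c`; every pair of reals has this form
(in some order), so `f` would be constant.
-/

section Equivariant

variable {ι : Type*} {g : (ι → ℝ) → ℝ}
  (htrans : ∀ (x : ι → ℝ) (c : ℝ), g (x + fun _ => c) = g x + c)
  (hscale : ∀ (x : ι → ℝ) (u : ℝ), 0 ≤ u → g (u • x) = u * g x)
include htrans hscale

theorem apply_smul_add_const_of_equivariant (x : ι → ℝ) {u : ℝ} (hu : 0 ≤ u) (c : ℝ) :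
    g (u • x + fun _ => c) = u * g x + c := by
  rw [htrans, hscale x u hu]

theorem apply_const_of_equivariant (c : ℝ) : g (fun _ => c) = c := by
  simpa using apply_smul_add_const_of_equivariant htrans hscale 0 le_rfl c

end Equivariant

theorem eq_of_forall_nonneg_mul_add_eq {f : ℝ → ℝ} {a b : ℝ} (hab : a ≠ b)
    (h : ∀ u, 0 ≤ u → ∀ c, f (u * a + c) = f (u * b + c)) (y₁ y₂ : ℝ) : f y₁ = f y₂ := by
  wlog hy : 0 ≤ (y₁ - y₂) / (a - b) generalizing y₁ y₂
  · exact (this y₂ y₁ (by rw [← neg_sub, neg_div]; linarith)).symm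
  have hab' : a - b ≠ 0 := sub_ne_zero.mpr hab
  convert h _ hy (y₁ - (y₁ - y₂) / (a - b) * a) using 2 <;> field_simp <;> ring

theorem stmt8_general (d : ℕ) (f₁ f₂ : ℝ → ℝ) (g₁ g₂ : (Fin d → ℝ) → ℝ)
    (hf₁ : ∃ y₁ y₂ : ℝ, f₁ y₁ ≠ f₁ y₂)
    (h₁trans : ∀ (x : Fin d → ℝ) (c : ℝ), g₁ (x + fun _ => c) = g₁ x + c)
    (h₁scale : ∀ (x : Fin d → ℝ) (u : ℝ), 0 ≤ u → g₁ (u • x) = u * g₁ x)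
    (h₂trans : ∀ (x : Fin d → ℝ) (c : ℝ), g₂ (x + fun _ => c) = g₂ x + c)
    (h₂scale : ∀ (x : Fin d → ℝ) (u : ℝ), 0 ≤ u → g₂ (u • x) = u * g₂ x)
    (hcomp : ∀ x : Fin d → ℝ, f₁ (g₁ x) = f₂ (g₂ x)) :
    f₁ = f₂ ∧ g₁ = g₂ := by
  have hf : f₁ = f₂ := funext fun c => by
    simpa [apply_const_of_equivariant h₁trans h₁scale,
      apply_const_of_equivariant h₂trans h₂scale] using hcomp fun _ => c
  refine ⟨hf, funext fun x => by_contra fun hne => ?_⟩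
  obtain ⟨y₁, y₂, hy⟩ := hf₁
  refine hy (eq_of_forall_nonneg_mul_add_eq hne (fun u hu c => ?_) y₁ y₂)
  have hcomp_ux := hcomp (u • x + fun _ => c)
  rwa [apply_smul_add_const_of_equivariant h₁trans h₁scale x hu,
    apply_smul_add_const_of_equivariant h₂trans h₂scale x hu, ← hf] at hcomp_ux

/-- Uniqueness of the representation `f ∘ g`: if `f₁, f₂` are non-constant and
`g₁, g₂` are translation-scale equivariant with `f₁ ∘ g₁ = f₂ ∘ g₂`, then
`f₁ = f₂` and `g₁ = g₂`. -/
theorem stmt8 (d : ℕ) (hd : 0 < d) (f₁ f₂ : ℝ → ℝ) (g₁ g₂ : (Fin d → ℝ) → ℝ)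
    (hf₁ : ∃ y₁ y₂ : ℝ, f₁ y₁ ≠ f₁ y₂)
    (hf₂ : ∃ y₁ y₂ : ℝ, f₂ y₁ ≠ f₂ y₂)
    (h₁trans : ∀ (x : Fin d → ℝ) (c : ℝ), g₁ (x + fun _ => c) = g₁ x + c)
    (h₁scale : ∀ (x : Fin d → ℝ) (u : ℝ), 0 ≤ u → g₁ (u • x) = u * g₁ x)
    (h₂trans : ∀ (x : Fin d → ℝ) (c : ℝ), g₂ (x + fun _ => c) = g₂ x + c)
    (h₂scale : ∀ (x : Fin d → ℝ) (u : ℝ), 0 ≤ u → g₂ (u • x) = u * g₂ x)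
    (hcomp : ∀ x : Fin d → ℝ, f₁ (g₁ x) = f₂ (g₂ x)) :
    f₁ = f₂ ∧ g₁ = g₂ :=
  stmt8_general d f₁ f₂ g₁ g₂ hf₁ h₁trans h₁scale h₂trans h₂scale hcomp
end

section
/- Let Z = (Z₁, Z₂) be a bivariate normal random vector with mean zero and Var(Z₁) = Var(Z₂) = σ². Then Var(max{Z₁, Z₂}) ≤ Var(Z₂) = σ². -/
/-!
Write `max Z₁ Z₂ = (W + |D|) / 2` with `W = Z₁ + Z₂` and `D = Z₁ - Z₂`. The pair `(W, D)`
is jointly Gaussian and `Cov(W, D) = Var Z₁ - Var Z₂ = 0`, so `W` and `D` are independent,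
hence so are `W` and `|D|`. Since also `Var |D| ≤ Var D`,
`Var (max Z₁ Z₂) = (Var W + Var |D|) / 4 ≤ (Var W + Var D) / 4 = (Var Z₁ + Var Z₂) / 2 = σ²`.
-/

open MeasureTheory ProbabilityTheory
open scoped NNReal

lemma hasGaussianLaw_prodMk_of_map_linearCombination {Ω : Type*} {mΩ : MeasurableSpace Ω}
    {P : Measure Ω} {X Y : Ω → ℝ}
    (h : ∀ a b : ℝ, ∃ (m : ℝ) (v : ℝ≥0),
      P.map (fun ω ↦ a * X ω + b * Y ω) = gaussianReal m v) :
    HasGaussianLaw (fun ω ↦ (X ω, Y ω)) P := by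
  -- The image of a non-`AEMeasurable` map is the zero measure, which is not Gaussian.
  have aemeasurable_of (a b : ℝ) : AEMeasurable (fun ω ↦ a * X ω + b * Y ω) P := by
    obtain ⟨m, v, hmv⟩ := h a b
    exact .of_map_ne_zero (by simp [hmv, IsProbabilityMeasure.ne_zero])
  have hX : AEMeasurable X P := by simpa using aemeasurable_of 1 0
  have hY : AEMeasurable Y P := by simpa using aemeasurable_of 0 1
  refine ⟨isGaussian_of_map_eq_gaussianReal fun L ↦ ?_⟩
  obtain ⟨m, v, hmv⟩ := h (L (1, 0)) (L (0, 1))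
  refine ⟨m, v, ?_⟩
  rw [AEMeasurable.map_map_of_aemeasurable L.continuous.aemeasurable (hX.prodMk hY), ← hmv]
  congr 1
  ext ω
  rw [Function.comp_apply,
    show (X ω, Y ω) = X ω • ((1 : ℝ), (0 : ℝ)) + Y ω • (0, 1) by simp, map_add,
    map_smul, map_smul, smul_eq_mul, smul_eq_mul, mul_comm, mul_comm (Y ω)]

section Moments

variable {Ω : Type*} {mΩ : MeasurableSpace Ω} {μ : Measure Ω} {X Y : Ω → ℝ}

lemma variance_abs_le [IsProbabilityMeasure μ] (hX : MemLp X 2 μ) :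
    Var[|X|; μ] ≤ Var[X; μ] := by
  rw [variance_eq_sub hX.abs, variance_eq_sub hX]
  simp only [Pi.pow_apply, Pi.abs_apply, sq_abs]
  exact sub_le_sub_left (sq_le_sq.mpr (abs_integral_le_integral_abs.trans (le_abs_self _))) _

lemma covariance_add_sub [IsFiniteMeasure μ] (hX : MemLp X 2 μ) (hY : MemLp Y 2 μ) :
    cov[X + Y, X - Y; μ] = Var[X; μ] - Var[Y; μ] := by
  rw [covariance_add_left hX hY (hX.sub hY), covariance_sub_right hX hX hY,
    covariance_sub_right hY hX hY, covariance_self hX.aemeasurable,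
    covariance_self hY.aemeasurable, covariance_comm]
  ring

lemma variance_add_add_variance_sub [IsFiniteMeasure μ] (hX : MemLp X 2 μ) (hY : MemLp Y 2 μ) :
    Var[X + Y; μ] + Var[X - Y; μ] = 2 * Var[X; μ] + 2 * Var[Y; μ] := by
  rw [variance_add hX hY, variance_sub hX hY]
  ring

end Moments

theorem stmt14_general {Ω : Type*} [MeasurableSpace Ω] (μ : Measure Ω) [IsProbabilityMeasure μ]
    (Z₁ Z₂ : Ω → ℝ) (σ : ℝ)
    (hgauss : ∀ a b : ℝ, ∃ v : NNReal,
      μ.map (fun ω => a * Z₁ ω + b * Z₂ ω) = gaussianReal 0 v)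
    (hv₁ : variance Z₁ μ = σ ^ 2) (hv₂ : variance Z₂ μ = σ ^ 2) :
    variance (fun ω => max (Z₁ ω) (Z₂ ω)) μ ≤ σ ^ 2 := by
  set W := Z₁ + Z₂
  set D := Z₁ - Z₂
  have hZ : HasGaussianLaw (fun ω ↦ (Z₁ ω, Z₂ ω)) μ :=
    hasGaussianLaw_prodMk_of_map_linearCombination fun a b ↦ ⟨0, hgauss a b⟩
  have hWD : HasGaussianLaw (fun ω ↦ (W ω, D ω)) μ :=
    hasGaussianLaw_prodMk_of_map_linearCombination fun a b ↦ by
      obtain ⟨v, hv⟩ := hgauss (a + b) (a - b)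
      refine ⟨0, v, ?_⟩
      rw [← hv]
      congr 1
      ext ω
      simp only [W, D, Pi.add_apply, Pi.sub_apply]
      ring
  have hZ₁ : MemLp Z₁ 2 μ := hZ.fst.memLp_two
  have hZ₂ : MemLp Z₂ 2 μ := hZ.snd.memLp_two
  have hcov : cov[W, D; μ] = 0 := by rw [covariance_add_sub hZ₁ hZ₂, hv₁, hv₂, sub_self]
  have hindep : IndepFun W |D| μ :=
    (hWD.indepFun_of_covariance_eq_zero hcov).comp measurable_id measurable_abs
  calc Var[fun ω ↦ max (Z₁ ω) (Z₂ ω); μ] = Var[fun ω ↦ 2⁻¹ * (W + |D|) ω; μ] := by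
        simp_rw [sup_eq_half_smul_add_add_abs_sub' ℝ, abs_sub_comm (Z₂ _), smul_eq_mul]
        rfl
    _ = 4⁻¹ * (Var[W; μ] + Var[|D|; μ]) := by
        rw [variance_const_mul, hindep.variance_add (hZ₁.add hZ₂) (hZ₁.sub hZ₂).abs]
        norm_num
        rfl
    _ ≤ 4⁻¹ * (Var[W; μ] + Var[D; μ]) := by gcongr; exact variance_abs_le (hZ₁.sub hZ₂)
    _ = σ ^ 2 := by rw [variance_add_add_variance_sub hZ₁ hZ₂, hv₁, hv₂]; ring

/-- Moriguti's inequality: for a centered bivariate Gaussian vector `(Z₁, Z₂)` with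
`Var(Z₁) = Var(Z₂) = σ²`, we have `Var(max{Z₁, Z₂}) ≤ σ²`. -/
theorem stmt14 {Ω : Type*} [MeasurableSpace Ω] (μ : Measure Ω) [IsProbabilityMeasure μ]
    (Z₁ Z₂ : Ω → ℝ) (σ : ℝ) (hσ : 0 < σ)
    (hm₁ : Measurable Z₁) (hm₂ : Measurable Z₂)
    (hgauss : ∀ a b : ℝ, ∃ v : NNReal,
      μ.map (fun ω => a * Z₁ ω + b * Z₂ ω) = gaussianReal 0 v)
    (hv₁ : variance Z₁ μ = σ ^ 2) (hv₂ : variance Z₂ μ = σ ^ 2) :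
    variance (fun ω => max (Z₁ ω) (Z₂ ω)) μ ≤ σ ^ 2 :=
  stmt14_general μ Z₁ Z₂ σ hgauss hv₁ hv₂
end
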